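/- (One-step Bellman unroll of the occupancy, SOPE_1 identity.) Under the support assumption, J(π_e) = E_{τ∼p_{π_b}}[ρ_1 r(S_1,A_1) + Σ_{t=2}^{∞} γ^{t−1} (d^{π_e}(S_{t−1},A_{t−1})/d^{π_b}(S_{t−1},A_{t−1})) ρ_t r(S_t,A_t)], where all ratios are well defined p_{π_b}-almost surely. -/

import Mathlib

open Finset

variable {S A : Type*} [Fintype S] [Fintype A] [DecidableEq S] [DecidableEq A]
  [Inhabited S] [Inhabited A]

/-- Weight contributed by the `t`-th step of trajectory `τ` under initial
distribution `d1`, transition kernel `T` and policy `π` (`π s a = π(a|s)`,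
`T s a s' = T(s'|s,a)`). -/
noncomputable def stepW (d1 : S → ℝ) (T : S → A → S → ℝ) (π : S → A → ℝ)
    (τ : ℕ → S × A) : ℕ → ℝ
  | 0 => d1 (τ 0).1 * π (τ 0).1 (τ 0).2
  | t + 1 => T (τ t).1 (τ t).2 (τ (t + 1)).1 * π (τ (t + 1)).1 (τ (t + 1)).2

/-- Probability under `p_π` of the first `n` steps (times `0, …, n-1`) of `τ`. -/
noncomputable def preP (d1 : S → ℝ) (T : S → A → S → ℝ) (π : S → A → ℝ)
    (n : ℕ) (τ : ℕ → S × A) : ℝ :=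
  ∏ t ∈ range n, stepW d1 T π τ t

/-- Extension of a length-`n` prefix to an infinite trajectory. -/
def extTraj {n : ℕ} (σ : Fin n → S × A) : ℕ → S × A :=
  fun t => if h : t < n then σ ⟨t, h⟩ else default

/-- Expectation under `p_π` of a function depending only on the first `n` steps
of the trajectory. -/
noncomputable def expVal (d1 : S → ℝ) (T : S → A → S → ℝ) (π : S → A → ℝ)
    (n : ℕ) (f : (ℕ → S × A) → ℝ) : ℝ :=
  ∑ σ : Fin n → S × A, preP d1 T π n (extTraj σ) * f (extTraj σ)

/-- `d_t^π(s,a)`, the time-`t` state-action distribution (time is 0-indexed,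
so `t = 0` is the paper's time `1`). -/
noncomputable def dSA (d1 : S → ℝ) (T : S → A → S → ℝ) (π : S → A → ℝ)
    (t : ℕ) (s : S) (a : A) : ℝ :=
  expVal d1 T π (t + 1) (fun τ => if τ t = (s, a) then 1 else 0)

/-- Single-step likelihood ratio `ρ_t = π_e(A_t|S_t)/π_b(A_t|S_t)`
(0-indexed time). -/
noncomputable def rho (πb πe : S → A → ℝ) (τ : ℕ → S × A) (t : ℕ) : ℝ :=
  πe (τ t).1 (τ t).2 / πb (τ t).1 (τ t).2

/-- Conditional expectation under `p_π` given `(S_t, A_t) = (s, a)`, for a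
function of the first `n` steps. -/
noncomputable def condExpSA (d1 : S → ℝ) (T : S → A → S → ℝ) (π : S → A → ℝ)
    (n t : ℕ) (s : S) (a : A) (f : (ℕ → S × A) → ℝ) : ℝ :=
  expVal d1 T π n (fun τ => if τ t = (s, a) then f τ else 0) / dSA d1 T π t s a

/-- Averaged state-action distribution `d_{1:Th}^π` over the first `Th` steps
with discount `γ`. -/
noncomputable def dAvg (d1 : S → ℝ) (T : S → A → S → ℝ) (π : S → A → ℝ)
    (γ : ℝ) (Th : ℕ) (s : S) (a : A) : ℝ :=
  (∑ t ∈ range Th, γ ^ t * dSA d1 T π t s a) / (∑ t ∈ range Th, γ ^ t)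

/-- Discounted average state-action occupancy `d^π` (infinite horizon),
`d^π(s,a) = (1-γ) Σ_{t≥1} γ^{t-1} d_t^π(s,a)`. -/
noncomputable def dInf (d1 : S → ℝ) (T : S → A → S → ℝ) (π : S → A → ℝ)
    (γ : ℝ) (s : S) (a : A) : ℝ :=
  (1 - γ) * ∑' t : ℕ, γ ^ t * dSA d1 T π t s a

/-- Infinite-horizon value `J(π) = E_{p_π}[Σ_{t≥1} γ^{t-1} R_t]`. -/
noncomputable def Jinf (d1 : S → ℝ) (T : S → A → S → ℝ) (π : S → A → ℝ)
    (r : S → A → ℝ) (γ : ℝ) : ℝ :=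
  ∑' t : ℕ, γ ^ t * expVal d1 T π (t + 1) (fun τ => r (τ t).1 (τ t).2)

/-- Doubly-robust weight `w(m, n)` of the paper (`m` is the paper's 1-indexed
time, with `w(0, n) = 1`). -/
noncomputable def wDR (d1 : S → ℝ) (T : S → A → S → ℝ) (πb πe : S → A → ℝ)
    (γ : ℝ) (n : ℕ) (τ : ℕ → S × A) (m : ℕ) : ℝ :=
  if m = 0 then 1
  else if m ≤ n then ∏ j ∈ range m, rho πb πe τ j
  else (dInf d1 T πe γ (τ (m - n - 1)).1 (τ (m - n - 1)).2 /
        dInf d1 T πb γ (τ (m - n - 1)).1 (τ (m - n - 1)).2) *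
      ∏ j ∈ Icc (m - n) (m - 1), rho πb πe τ j

set_option linter.unusedSectionVars false
set_option linter.unusedVariables false

variable (d1 : S → ℝ) (T : S → A → S → ℝ) (π : S → A → ℝ)

lemma extTraj_lt {n : ℕ} (σ : Fin n → S × A) {t : ℕ} (ht : t < n) :
    extTraj σ t = σ ⟨t, ht⟩ := dif_pos ht

lemma extTraj_snoc {n : ℕ} (σ : Fin n → S × A) (q : S × A) {t : ℕ} (ht : t < n) :
    extTraj (Fin.snoc σ q) t = extTraj σ t := by
  rw [extTraj_lt _ (ht.trans (Nat.lt_succ_self n)), extTraj_lt _ ht]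
  have : (⟨t, ht.trans (Nat.lt_succ_self n)⟩ : Fin (n+1)) = Fin.castSucc ⟨t, ht⟩ := rfl
  rw [this, Fin.snoc_castSucc]

lemma extTraj_snoc_last {n : ℕ} (σ : Fin n → S × A) (q : S × A) :
    extTraj (Fin.snoc σ q) n = q := by
  rw [extTraj_lt _ (Nat.lt_succ_self n)]
  have : (⟨n, Nat.lt_succ_self n⟩ : Fin (n+1)) = Fin.last n := rfl
  rw [this, Fin.snoc_last]

lemma preP_snoc (n : ℕ) (σ : Fin (n+1) → S × A) (q : S × A) :
    preP d1 T π (n+2) (extTraj (Fin.snoc σ q)) =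
      preP d1 T π (n+1) (extTraj σ) *
        (T (extTraj σ n).1 (extTraj σ n).2 q.1 * π q.1 q.2) := by
  unfold preP
  rw [Finset.prod_range_succ]
  congr 1
  · apply Finset.prod_congr rfl
    intro t ht
    rw [Finset.mem_range] at ht
    match t with
    | 0 => simp only [stepW, extTraj_snoc σ q (show 0 < n+1 from ht)]
    | Nat.succ t =>
      simp only [stepW]
      rw [extTraj_snoc σ q (show t < n+1 from Nat.lt_of_succ_lt ht),
          extTraj_snoc σ q ht]
  · show stepW d1 T π _ (n+1) = _
    simp only [stepW]
    rw [extTraj_snoc σ q (Nat.lt_succ_self n), extTraj_snoc_last]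

lemma expVal_one (g : S × A → ℝ) :
    expVal d1 T π 1 (fun τ => g (τ 0)) = ∑ p : S × A, d1 p.1 * π p.1 p.2 * g p := by
  unfold expVal
  rw [← Equiv.sum_comp (Equiv.funUnique (Fin 1) (S × A)).symm]
  apply Finset.sum_congr rfl
  intro p _
  have h0 : extTraj ((Equiv.funUnique (Fin 1) (S × A)).symm p) 0 = p := by
    rw [extTraj_lt _ (by norm_num : (0:ℕ) < 1)]; rfl
  simp only [preP, Finset.prod_range_one, stepW, h0]

lemma expVal_last (n : ℕ) (g : S × A → ℝ) :
    expVal d1 T π (n+1) (fun τ => g (τ n)) =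
      ∑ p : S × A, dSA d1 T π n p.1 p.2 * g p := by
  symm
  unfold dSA expVal
  simp_rw [Finset.sum_mul]
  rw [Finset.sum_comm]
  apply Finset.sum_congr rfl
  intro σ _
  simp_rw [mul_assoc, ← Finset.mul_sum]
  congr 1
  simp [ite_mul, Finset.sum_ite_eq]

lemma dSA_zero (s : S) (a : A) : dSA d1 T π 0 s a = d1 s * π s a := by
  unfold dSA
  rw [expVal_one d1 T π (fun p => if p = (s,a) then (1:ℝ) else 0)]
  simp [Finset.sum_ite_eq', mul_ite]

lemma expVal_two (k : ℕ) (g : S × A → S × A → ℝ) :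
    expVal d1 T π (k+2) (fun τ => g (τ k) (τ (k+1))) =
      ∑ p : S × A, ∑ q : S × A,
        dSA d1 T π k p.1 p.2 * (T p.1 p.2 q.1 * π q.1 q.2 * g p q) := by
  rw [expVal, ← Equiv.sum_comp
      (⟨fun x => Fin.snoc x.1 x.2, fun σ => (Fin.init σ, σ (Fin.last (k+1))),
        fun x => by simp, fun σ => by simp⟩ :
        ((Fin (k+1) → S × A) × (S × A)) ≃ (Fin (k+2) → S × A)),
    Fintype.sum_prod_type]
  simp only [Equiv.coe_fn_mk]
  have key : ∀ (σ : Fin (k+1) → S × A) (q : S × A),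
      preP d1 T π (k+2) (extTraj (Fin.snoc σ q)) *
        g (extTraj (Fin.snoc σ q) k) (extTraj (Fin.snoc σ q) (k+1)) =
      preP d1 T π (k+1) (extTraj σ) *
        (T (extTraj σ k).1 (extTraj σ k).2 q.1 * π q.1 q.2 * g (extTraj σ k) q) := by
    intro σ q
    rw [preP_snoc, extTraj_snoc_last σ q, extTraj_snoc σ q (Nat.lt_succ_self k)]
    ring
  calc (∑ σ : Fin (k+1) → S × A, ∑ q : S × A,
          preP d1 T π (k+2) (extTraj (Fin.snoc σ q)) *
            g (extTraj (Fin.snoc σ q) k) (extTraj (Fin.snoc σ q) (k+1)))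
      = ∑ q : S × A, ∑ σ : Fin (k+1) → S × A,
          preP d1 T π (k+1) (extTraj σ) *
            (T (extTraj σ k).1 (extTraj σ k).2 q.1 * π q.1 q.2 * g (extTraj σ k) q) := by
        rw [Finset.sum_comm]
        exact Finset.sum_congr rfl fun q _ => Finset.sum_congr rfl fun σ _ => key σ q
    _ = ∑ q : S × A, ∑ p : S × A, dSA d1 T π k p.1 p.2 *
          (T p.1 p.2 q.1 * π q.1 q.2 * g p q) := by
        apply Finset.sum_congr rfl
        intro q _
        exact expVal_last d1 T π k (fun p => T p.1 p.2 q.1 * π q.1 q.2 * g p q)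
    _ = _ := Finset.sum_comm

lemma dSA_succ (k : ℕ) (s' : S) (a' : A) :
    dSA d1 T π (k+1) s' a' =
      ∑ p : S × A, dSA d1 T π k p.1 p.2 * (T p.1 p.2 s' * π s' a') := by
  have h := expVal_two d1 T π k (fun _ q => if q = (s',a') then (1:ℝ) else 0)
  have h2 : dSA d1 T π (k+1) s' a' =
      expVal d1 T π (k+2) (fun τ => if τ (k+1) = (s',a') then (1:ℝ) else 0) := rfl
  rw [h2]
  rw [show (fun τ : ℕ → S × A => if τ (k+1) = (s',a') then (1:ℝ) else 0)
      = (fun τ : ℕ → S × A => (fun _ q => if q = (s',a') then (1:ℝ) else 0) (τ k) (τ (k+1)))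
      from rfl, h]
  apply Finset.sum_congr rfl
  intro p _
  simp [mul_ite, Finset.sum_ite_eq']
lemma stepW_nonneg (hd1 : ∀ s, 0 ≤ d1 s) (hT : ∀ s a s', 0 ≤ T s a s')
    (hπ : ∀ s a, 0 ≤ π s a) (τ : ℕ → S × A) (t : ℕ) : 0 ≤ stepW d1 T π τ t := by
  match t with
  | 0 => exact mul_nonneg (hd1 _) (hπ _ _)
  | Nat.succ t => exact mul_nonneg (hT _ _ _) (hπ _ _)

lemma preP_nonneg (hd1 : ∀ s, 0 ≤ d1 s) (hT : ∀ s a s', 0 ≤ T s a s')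
    (hπ : ∀ s a, 0 ≤ π s a) (n : ℕ) (τ : ℕ → S × A) : 0 ≤ preP d1 T π n τ :=
  Finset.prod_nonneg fun t _ => stepW_nonneg d1 T π hd1 hT hπ τ t

lemma dSA_nonneg (hd1 : ∀ s, 0 ≤ d1 s) (hT : ∀ s a s', 0 ≤ T s a s')
    (hπ : ∀ s a, 0 ≤ π s a) (n : ℕ) (s : S) (a : A) : 0 ≤ dSA d1 T π n s a := by
  apply Finset.sum_nonneg
  intro σ _
  exact mul_nonneg (preP_nonneg d1 T π hd1 hT hπ _ _) (by positivity)

lemma sum_dSA (hd1 : ∀ s, 0 ≤ d1 s) (hd1sum : ∑ s, d1 s = 1)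
    (hT : ∀ s a s', 0 ≤ T s a s') (hTsum : ∀ s a, ∑ s', T s a s' = 1)
    (hπ : ∀ s a, 0 ≤ π s a) (hπsum : ∀ s, ∑ a, π s a = 1) :
    ∀ n, ∑ p : S × A, dSA d1 T π n p.1 p.2 = 1 := by
  intro n
  induction n with
  | zero =>
    simp_rw [dSA_zero]
    rw [Fintype.sum_prod_type]
    simp_rw [← Finset.mul_sum, hπsum, mul_one]
    exact hd1sum
  | succ k ih =>
    simp_rw [dSA_succ]
    rw [Finset.sum_comm]
    have : ∀ p : S × A, ∑ q : S × A, dSA d1 T π k p.1 p.2 * (T p.1 p.2 q.1 * π q.1 q.2)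
        = dSA d1 T π k p.1 p.2 := by
      intro p
      rw [← Finset.mul_sum, Fintype.sum_prod_type]
      simp_rw [← Finset.mul_sum, hπsum, mul_one, hTsum, mul_one]
    calc ∑ p : S × A, ∑ q : S × A, dSA d1 T π k p.1 p.2 * (T p.1 p.2 q.1 * π q.1 q.2)
        = ∑ p : S × A, dSA d1 T π k p.1 p.2 := Finset.sum_congr rfl fun p _ => this p
      _ = 1 := ih

lemma dSA_le_one (hd1 : ∀ s, 0 ≤ d1 s) (hd1sum : ∑ s, d1 s = 1)
    (hT : ∀ s a s', 0 ≤ T s a s') (hTsum : ∀ s a, ∑ s', T s a s' = 1)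
    (hπ : ∀ s a, 0 ≤ π s a) (hπsum : ∀ s, ∑ a, π s a = 1)
    (n : ℕ) (s : S) (a : A) : dSA d1 T π n s a ≤ 1 := by
  have h := sum_dSA d1 T π hd1 hd1sum hT hTsum hπ hπsum n
  calc dSA d1 T π n s a = dSA d1 T π n ((s,a) : S × A).1 ((s,a) : S × A).2 := rfl
    _ ≤ ∑ p : S × A, dSA d1 T π n p.1 p.2 :=
        Finset.single_le_sum (fun p _ => dSA_nonneg d1 T π hd1 hT hπ n p.1 p.2)
          (Finset.mem_univ (s,a))
    _ = 1 := h

lemma dSA_support {πb πe : S → A → ℝ}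
    (hd1 : ∀ s, 0 ≤ d1 s) (hT : ∀ s a s', 0 ≤ T s a s')
    (hπb : ∀ s a, 0 ≤ πb s a) (hπe : ∀ s a, 0 ≤ πe s a)
    (hbe : ∀ s a, πb s a = 0 → πe s a = 0)
    (n : ℕ) (s : S) (a : A) (hb : dSA d1 T πb n s a = 0) :
    dSA d1 T πe n s a = 0 := by
  unfold dSA expVal at hb ⊢
  have hterm : ∀ σ ∈ (Finset.univ : Finset (Fin (n+1) → S × A)),
      preP d1 T πb (n+1) (extTraj σ) *
        (if extTraj σ n = (s,a) then (1:ℝ) else 0) = 0 := by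
    rw [← Finset.sum_eq_zero_iff_of_nonneg]
    · exact hb
    · intro σ _
      exact mul_nonneg (preP_nonneg d1 T πb hd1 hT hπb _ _) (by positivity)
  apply Finset.sum_eq_zero
  intro σ _
  by_cases hi : extTraj σ n = (s, a)
  · have hg : (fun τ : ℕ → S × A => if τ n = (s,a) then (1:ℝ) else 0) (extTraj σ) = 1 := by
      simp [hi]
    rw [hg, mul_one]
    have h0 : preP d1 T πb (n+1) (extTraj σ) = 0 := by
      have := hterm σ (Finset.mem_univ σ)
      rwa [hi, if_pos rfl, mul_one] at this
    unfold preP at h0 ⊢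
    obtain ⟨t, ht, hft⟩ := Finset.prod_eq_zero_iff.mp h0
    apply Finset.prod_eq_zero ht
    match t with
    | 0 =>
      simp only [stepW] at hft ⊢
      rcases mul_eq_zero.mp hft with h | h
      · rw [h, zero_mul]
      · rw [hbe _ _ h, mul_zero]
    | Nat.succ t =>
      simp only [stepW] at hft ⊢
      rcases mul_eq_zero.mp hft with h | h
      · rw [h, zero_mul]
      · rw [hbe _ _ h, mul_zero]
  · have hg : (fun τ : ℕ → S × A => if τ n = (s,a) then (1:ℝ) else 0) (extTraj σ) = 0 := by
      simp [hi]
    rw [hg, mul_zero]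
/-- one-step Bellman unroll of the occupancy, SOPE_1 identity:
`J(π_e) = E_{τ∼p_πb}[ρ_1 r(S_1,A_1)
  + Σ_(t=2)^∞ γ^(t-1) (d^πe(S_(t-1),A_(t-1))/d^πb(S_(t-1),A_(t-1))) ρ_t r(S_t,A_t)]`
(tail reindexed by `t = k + 2`, 0-indexed coordinates). -/
theorem sope1_identity
    (d1 : S → ℝ) (T : S → A → S → ℝ) (πb πe : S → A → ℝ) (r : S → A → ℝ)
    (γ : ℝ)
    (hd1 : ∀ s, 0 ≤ d1 s) (hd1sum : ∑ s, d1 s = 1)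
    (hT : ∀ s a s', 0 ≤ T s a s') (hTsum : ∀ s a, ∑ s', T s a s' = 1)
    (hπb : ∀ s a, 0 ≤ πb s a) (hπbsum : ∀ s, ∑ a, πb s a = 1)
    (hπe : ∀ s a, 0 ≤ πe s a) (hπesum : ∀ s, ∑ a, πe s a = 1)
    (hγ0 : 0 ≤ γ) (hγ1 : γ < 1)
    (hsupp : ∀ s a, 0 < πe s a → 0 < πb s a) :
    Jinf d1 T πe r γ
      = expVal d1 T πb 1 (fun τ => rho πb πe τ 0 * r (τ 0).1 (τ 0).2)
        + ∑' k : ℕ, γ ^ (k + 1) * expVal d1 T πb (k + 2)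
            (fun τ => (dInf d1 T πe γ (τ k).1 (τ k).2 /
                dInf d1 T πb γ (τ k).1 (τ k).2) *
              rho πb πe τ (k + 1) * r (τ (k + 1)).1 (τ (k + 1)).2) := by
  classical
  have hbe : ∀ s a, πb s a = 0 → πe s a = 0 := by
    intro s a h
    by_contra he
    have := hsupp s a (lt_of_le_of_ne (hπe s a) (Ne.symm he))
    rw [h] at this
    exact lt_irrefl 0 this
  have hgeo : Summable (fun k : ℕ => γ ^ k) := summable_geometric_of_lt_one hγ0 hγ1
  -- abbreviations
  set Aof : ℕ → ℝ := fun t => ∑ p : S × A, dSA d1 T πe t p.1 p.2 * r p.1 p.2 with hAof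
  set M : ℝ := ∑ p : S × A, |r p.1 p.2| with hMdef
  set B : S × A → ℝ := fun p => ∑ q : S × A, T p.1 p.2 q.1 * πe q.1 q.2 * r q.1 q.2 with hB
  set c : S × A → ℝ :=
    fun p => dInf d1 T πe γ p.1 p.2 / dInf d1 T πb γ p.1 p.2 with hc
  set Db : S × A → ℝ := fun p => ∑' k : ℕ, γ ^ k * dSA d1 T πb k p.1 p.2 with hDb
  set De : S × A → ℝ := fun p => ∑' k : ℕ, γ ^ k * dSA d1 T πe k p.1 p.2 with hDe
  -- summability of the occupancy series
  have hsumDb : ∀ p : S × A, Summable (fun k : ℕ => γ ^ k * dSA d1 T πb k p.1 p.2) := by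
    intro p
    apply Summable.of_nonneg_of_le
      (fun k => mul_nonneg (pow_nonneg hγ0 k) (dSA_nonneg d1 T πb hd1 hT hπb k p.1 p.2))
      (fun k => ?_) hgeo
    calc γ ^ k * dSA d1 T πb k p.1 p.2 ≤ γ ^ k * 1 :=
          mul_le_mul_of_nonneg_left
            (dSA_le_one d1 T πb hd1 hd1sum hT hTsum hπb hπbsum k p.1 p.2) (pow_nonneg hγ0 k)
      _ = γ ^ k := mul_one _
  have hsumDe : ∀ p : S × A, Summable (fun k : ℕ => γ ^ k * dSA d1 T πe k p.1 p.2) := by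
    intro p
    apply Summable.of_nonneg_of_le
      (fun k => mul_nonneg (pow_nonneg hγ0 k) (dSA_nonneg d1 T πe hd1 hT hπe k p.1 p.2))
      (fun k => ?_) hgeo
    calc γ ^ k * dSA d1 T πe k p.1 p.2 ≤ γ ^ k * 1 :=
          mul_le_mul_of_nonneg_left
            (dSA_le_one d1 T πe hd1 hd1sum hT hTsum hπe hπesum k p.1 p.2) (pow_nonneg hγ0 k)
      _ = γ ^ k := mul_one _
  -- the key occupancy-ratio identity
  have hkey : ∀ p : S × A, c p * Db p = De p := by
    intro p
    by_cases hD : Db p = 0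
    · have hzero : ∀ k, γ ^ k * dSA d1 T πb k p.1 p.2 = 0 := by
        intro k
        have h2 : 0 ≤ γ ^ k * dSA d1 T πb k p.1 p.2 :=
          mul_nonneg (pow_nonneg hγ0 k) (dSA_nonneg d1 T πb hd1 hT hπb k p.1 p.2)
        have h1 : γ ^ k * dSA d1 T πb k p.1 p.2 ≤ Db p :=
          Summable.le_tsum (hsumDb p) k (fun j _ =>
            mul_nonneg (pow_nonneg hγ0 j) (dSA_nonneg d1 T πb hd1 hT hπb j p.1 p.2))
        rw [hD] at h1
        linarith
      have hzeroe : ∀ k, γ ^ k * dSA d1 T πe k p.1 p.2 = 0 := by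
        intro k
        rcases mul_eq_zero.mp (hzero k) with h | h
        · rw [h, zero_mul]
        · rw [dSA_support d1 T hd1 hT hπb hπe hbe k p.1 p.2 h, mul_zero]
      have hDe0 : De p = 0 := by
        rw [hDe]
        simp only []
        rw [tsum_congr hzeroe, tsum_zero]
      rw [hD, mul_zero, hDe0]
    · have h1γ : (1:ℝ) - γ ≠ 0 := by linarith
      have hcb : dInf d1 T πb γ p.1 p.2 = (1 - γ) * Db p := rfl
      have hce : dInf d1 T πe γ p.1 p.2 = (1 - γ) * De p := rfl
      rw [hc]
      simp only []
      rw [hcb, hce, mul_div_mul_left _ _ h1γ, div_mul_cancel₀ _ hD]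
  -- Jinf as a series in Aof
  have hJ : Jinf d1 T πe r γ = ∑' t : ℕ, γ ^ t * Aof t := by
    unfold Jinf
    apply tsum_congr
    intro t
    congr 1
    exact expVal_last d1 T πe t (fun p => r p.1 p.2)
  -- summability of the value series
  have hMb : ∀ t, |Aof t| ≤ M := by
    intro t
    refine (Finset.abs_sum_le_sum_abs _ _).trans (Finset.sum_le_sum fun p _ => ?_)
    rw [abs_mul, abs_of_nonneg (dSA_nonneg d1 T πe hd1 hT hπe t p.1 p.2)]
    calc dSA d1 T πe t p.1 p.2 * |r p.1 p.2| ≤ 1 * |r p.1 p.2| :=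
          mul_le_mul_of_nonneg_right
            (dSA_le_one d1 T πe hd1 hd1sum hT hTsum hπe hπesum t p.1 p.2) (abs_nonneg _)
      _ = |r p.1 p.2| := one_mul _
  have hsumA : Summable (fun t : ℕ => γ ^ t * Aof t) := by
    apply Summable.of_abs
    apply Summable.of_nonneg_of_le (fun t => abs_nonneg _) (fun t => ?_) (hgeo.mul_left M)
    rw [abs_mul, abs_of_nonneg (pow_nonneg hγ0 t)]
    calc γ ^ t * |Aof t| ≤ γ ^ t * M :=
          mul_le_mul_of_nonneg_left (hMb t) (pow_nonneg hγ0 t)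
      _ = M * γ ^ t := mul_comm _ _
  have hsplit : ∑' t : ℕ, γ ^ t * Aof t = Aof 0 + ∑' k : ℕ, γ ^ (k+1) * Aof (k+1) := by
    rw [Summable.tsum_eq_zero_add hsumA, pow_zero, one_mul]
  -- first term
  have hterm0 : expVal d1 T πb 1 (fun τ => rho πb πe τ 0 * r (τ 0).1 (τ 0).2) = Aof 0 := by
    have h1 : expVal d1 T πb 1 (fun τ => rho πb πe τ 0 * r (τ 0).1 (τ 0).2)
        = ∑ p : S × A, d1 p.1 * πb p.1 p.2 * (πe p.1 p.2 / πb p.1 p.2 * r p.1 p.2) :=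
      expVal_one d1 T πb (fun p => πe p.1 p.2 / πb p.1 p.2 * r p.1 p.2)
    rw [h1, hAof]
    apply Finset.sum_congr rfl
    intro p _
    rw [dSA_zero]
    by_cases hb : πb p.1 p.2 = 0
    · rw [hb, hbe _ _ hb]; ring
    · field_simp
  -- tail expVal computation
  have htail : ∀ k : ℕ, expVal d1 T πb (k + 2)
      (fun τ => (dInf d1 T πe γ (τ k).1 (τ k).2 / dInf d1 T πb γ (τ k).1 (τ k).2) *
        rho πb πe τ (k + 1) * r (τ (k + 1)).1 (τ (k + 1)).2)
      = ∑ p : S × A, dSA d1 T πb k p.1 p.2 * (c p * B p) := by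
    intro k
    have h2 : expVal d1 T πb (k + 2)
        (fun τ => (dInf d1 T πe γ (τ k).1 (τ k).2 / dInf d1 T πb γ (τ k).1 (τ k).2) *
          rho πb πe τ (k + 1) * r (τ (k + 1)).1 (τ (k + 1)).2)
        = ∑ p : S × A, ∑ q : S × A, dSA d1 T πb k p.1 p.2 *
            (T p.1 p.2 q.1 * πb q.1 q.2 *
              ((dInf d1 T πe γ p.1 p.2 / dInf d1 T πb γ p.1 p.2) *
                (πe q.1 q.2 / πb q.1 q.2) * r q.1 q.2)) :=
      expVal_two d1 T πb k
        (fun p q => (dInf d1 T πe γ p.1 p.2 / dInf d1 T πb γ p.1 p.2) *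
          (πe q.1 q.2 / πb q.1 q.2) * r q.1 q.2)
    rw [h2]
    apply Finset.sum_congr rfl
    intro p _
    have hq : ∀ q : S × A,
        dSA d1 T πb k p.1 p.2 * (T p.1 p.2 q.1 * πb q.1 q.2 *
          ((dInf d1 T πe γ p.1 p.2 / dInf d1 T πb γ p.1 p.2) *
            (πe q.1 q.2 / πb q.1 q.2) * r q.1 q.2))
        = dSA d1 T πb k p.1 p.2 *
            (c p * (T p.1 p.2 q.1 * πe q.1 q.2 * r q.1 q.2)) := by
      intro q
      rw [hc]
      by_cases hb : πb q.1 q.2 = 0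
      · rw [hb, hbe _ _ hb]; ring
      · have h3 : πb q.1 q.2 * (πe q.1 q.2 / πb q.1 q.2) = πe q.1 q.2 := by
          field_simp
        calc dSA d1 T πb k p.1 p.2 * (T p.1 p.2 q.1 * πb q.1 q.2 *
              ((dInf d1 T πe γ p.1 p.2 / dInf d1 T πb γ p.1 p.2) *
                (πe q.1 q.2 / πb q.1 q.2) * r q.1 q.2))
            = dSA d1 T πb k p.1 p.2 * ((dInf d1 T πe γ p.1 p.2 / dInf d1 T πb γ p.1 p.2) *
                (T p.1 p.2 q.1 * (πb q.1 q.2 * (πe q.1 q.2 / πb q.1 q.2)) * r q.1 q.2)) := by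
              ring
          _ = _ := by rw [h3]
    calc (∑ q : S × A, dSA d1 T πb k p.1 p.2 *
            (T p.1 p.2 q.1 * πb q.1 q.2 *
              ((dInf d1 T πe γ p.1 p.2 / dInf d1 T πb γ p.1 p.2) *
                (πe q.1 q.2 / πb q.1 q.2) * r q.1 q.2)))
        = ∑ q : S × A, dSA d1 T πb k p.1 p.2 *
            (c p * (T p.1 p.2 q.1 * πe q.1 q.2 * r q.1 q.2)) :=
          Finset.sum_congr rfl fun q _ => hq q
      _ = dSA d1 T πb k p.1 p.2 * (c p * B p) := by
          rw [hB]
          simp only []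
          rw [Finset.mul_sum, Finset.mul_sum]
  -- Bellman step for πe
  have hbell : ∀ k : ℕ, ∑ p : S × A, dSA d1 T πe k p.1 p.2 * B p = Aof (k + 1) := by
    intro k
    have hA1 : Aof (k+1) = ∑ q : S × A,
        (∑ p : S × A, dSA d1 T πe k p.1 p.2 * (T p.1 p.2 q.1 * πe q.1 q.2)) * r q.1 q.2 := by
      rw [hAof]
      exact Finset.sum_congr rfl fun q _ => by rw [dSA_succ]
    rw [hA1, hB]
    simp only []
    simp_rw [Finset.mul_sum, Finset.sum_mul]
    rw [Finset.sum_comm]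
    exact Finset.sum_congr rfl fun q _ => Finset.sum_congr rfl fun p _ => by ring
  -- the tail series
  have hsum_pb : ∀ p : S × A,
      Summable (fun k : ℕ => γ ^ (k+1) * (dSA d1 T πb k p.1 p.2 * (c p * B p))) := by
    intro p
    have : (fun k : ℕ => γ ^ (k+1) * (dSA d1 T πb k p.1 p.2 * (c p * B p)))
        = fun k : ℕ => (γ * (c p * B p)) * (γ ^ k * dSA d1 T πb k p.1 p.2) := by
      funext k; ring
    rw [this]
    exact (hsumDb p).mul_left _
  have hsum_pe : ∀ p : S × A,
      Summable (fun k : ℕ => γ ^ (k+1) * (dSA d1 T πe k p.1 p.2 * B p)) := by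
    intro p
    have : (fun k : ℕ => γ ^ (k+1) * (dSA d1 T πe k p.1 p.2 * B p))
        = fun k : ℕ => (γ * B p) * (γ ^ k * dSA d1 T πe k p.1 p.2) := by
      funext k; ring
    rw [this]
    exact (hsumDe p).mul_left _
  have htails : ∑' k : ℕ, γ ^ (k+1) * (∑ p : S × A, dSA d1 T πb k p.1 p.2 * (c p * B p))
      = ∑' k : ℕ, γ ^ (k+1) * Aof (k+1) := by
    calc ∑' k : ℕ, γ ^ (k+1) * (∑ p : S × A, dSA d1 T πb k p.1 p.2 * (c p * B p))
        = ∑' k : ℕ, ∑ p : S × A, γ ^ (k+1) * (dSA d1 T πb k p.1 p.2 * (c p * B p)) := by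
          exact tsum_congr fun k => Finset.mul_sum _ _ _
      _ = ∑ p : S × A, ∑' k : ℕ, γ ^ (k+1) * (dSA d1 T πb k p.1 p.2 * (c p * B p)) :=
          Summable.tsum_finsetSum fun p _ => hsum_pb p
      _ = ∑ p : S × A, (γ * (c p * B p)) * Db p := by
          apply Finset.sum_congr rfl
          intro p _
          rw [hDb]
          simp only []
          rw [← tsum_mul_left]
          exact tsum_congr fun k => by ring
      _ = ∑ p : S × A, (γ * B p) * De p := by
          apply Finset.sum_congr rfl
          intro p _
          rw [← hkey p]
          ring
      _ = ∑ p : S × A, ∑' k : ℕ, γ ^ (k+1) * (dSA d1 T πe k p.1 p.2 * B p) := by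
          apply Finset.sum_congr rfl
          intro p _
          rw [hDe]
          simp only []
          rw [← tsum_mul_left]
          exact tsum_congr fun k => by ring
      _ = ∑' k : ℕ, ∑ p : S × A, γ ^ (k+1) * (dSA d1 T πe k p.1 p.2 * B p) :=
          (Summable.tsum_finsetSum fun p _ => hsum_pe p).symm
      _ = ∑' k : ℕ, γ ^ (k+1) * Aof (k+1) := by
          apply tsum_congr
          intro k
          rw [← hbell k, Finset.mul_sum]
  -- put everything together
  rw [hJ, hsplit, hterm0]
  congr 1
  rw [← htails]
  exact tsum_congr fun k => by rw [htail k]
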